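/- Let w be any word in the free monoid C* on the alphabet C = {x, y, e_1, …, e_n}. Then there exist a letter z ∈ {x, y}, a word u in the submonoid of C* generated by the letters {e_1, …, e_n}, and an integer r with 0 ≤ r ≤ n−1, such that w and z^r u are related by the smallest monoid congruence on C* containing the set of relations U. -/

import Mathlib

/-! The alphabet `C = {x, y, e_1, …, e_n}` (with `n + 2` letters), modelled as
`Bool ⊕ Fin n`: `.inl false` is the letter `x`, `.inl true` is the letter `y`,
and `.inr i` is the letter `e_{i+1}`. -/

/-- The free monoid on the alphabet `C = {x, y, e_1, …, e_n}`. -/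
abbrev Cw (n : ℕ) := FreeMonoid (Bool ⊕ Fin n)

/-- The letter `x`. -/
def Cx (n : ℕ) : Cw n := FreeMonoid.of (Sum.inl false)

/-- The letter `y`. -/
def Cy (n : ℕ) : Cw n := FreeMonoid.of (Sum.inl true)

/-- The letter `e_{i+1}` (so `Ce ⟨0,_⟩ = e_1`, …, `Ce ⟨n-1,_⟩ = e_n`). -/
def Ce {n : ℕ} (i : Fin n) : Cw n := FreeMonoid.of (Sum.inr i)

/-- The word `e_1 e_2 ⋯ e_n`. -/
def CeProd (n : ℕ) : Cw n := ((List.finRange n).map Ce).prod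

/-- The word `e_2 ⋯ e_n`. -/
def CeProdTail (n : ℕ) : Cw n := (((List.finRange n).drop 1).map Ce).prod

/-- The set `U` of relations of the paper (in `0`-based indexing of the letters `e`):
`(U_1) e_i² = e_i`; `(U_2) xy = e_n` and `yx = e_1`; `(U_3) x e_1 = x` and `e_1 y = y`;
`(U_4) e_i e_j = e_j e_i` for `i < j`; `(U_5) x e_{i+1} = e_i x` for `1 ≤ i ≤ n-1`;
`(U_6) x e_2 ⋯ e_n = e_1 e_2 ⋯ e_n`. -/
inductive Urel (n : ℕ) : Cw n → Cw n → Prop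
  | u1 (i : Fin n) : Urel n (Ce i * Ce i) (Ce i)
  | u2a (j : Fin n) : (j : ℕ) = n - 1 → Urel n (Cx n * Cy n) (Ce j)
  | u2b (i : Fin n) : (i : ℕ) = 0 → Urel n (Cy n * Cx n) (Ce i)
  | u3a (i : Fin n) : (i : ℕ) = 0 → Urel n (Cx n * Ce i) (Cx n)
  | u3b (i : Fin n) : (i : ℕ) = 0 → Urel n (Ce i * Cy n) (Cy n)
  | u4 (i j : Fin n) : i < j → Urel n (Ce i * Ce j) (Ce j * Ce i)
  | u5 (i j : Fin n) : (i : ℕ) + 1 = (j : ℕ) → Urel n (Cx n * Ce j) (Ce i * Cx n)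
  | u6 : Urel n (Cx n * CeProdTail n) (CeProd n)
section Aux
variable {n : ℕ}

abbrev K (n : ℕ) : Con (Cw n) := conGen (Urel n)

abbrev ES (n : ℕ) : Submonoid (Cw n) := Submonoid.closure (Set.range (Ce (n := n)))

lemma kof {a b : Cw n} (h : Urel n a b) : K n a b := ConGen.Rel.of a b h
lemma kt {a b c : Cw n} (h1 : K n a b) (h2 : K n b c) : K n a c := (K n).trans h1 h2
lemma ks {a b : Cw n} (h : K n a b) : K n b a := (K n).symm h
lemma kl {a b : Cw n} (t : Cw n) (h : K n a b) : K n (a * t) (b * t) := h.mul ((K n).refl t)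
lemma kr {a b : Cw n} (t : Cw n) (h : K n a b) : K n (t * a) (t * b) := ((K n).refl t).mul h
lemma kfix {a b a' b' : Cw n} (h : K n a' b') (ha : a = a') (hb : b = b') : K n a b := by
  rw [ha, hb]; exact h

def fTop (hn : 1 ≤ n) : Fin n := ⟨n - 1, by omega⟩

lemma ceMem (i : Fin n) : Ce i ∈ ES n := Submonoid.subset_closure ⟨i, rfl⟩

lemma prodMem (l : List (Fin n)) : (l.map Ce).prod ∈ ES n := by
  refine Submonoid.list_prod_mem _ ?_
  intro x hx
  simp only [List.mem_map] at hx
  obtain ⟨i, -, rfl⟩ := hx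
  exact ceMem i

lemma ceProdMem : CeProd n ∈ ES n := prodMem _
lemma ceProdTailMem : CeProdTail n ∈ ES n := prodMem _

/-- `e_top * x ≡ x`. -/
lemma eTopX (hn : 1 ≤ n) : K n (Ce (fTop hn) * Cx n) (Cx n) := by
  refine kt (kl _ (ks (kof (.u2a (fTop hn) rfl)))) ?_
  -- (x*y)*x ≡ x
  refine kt (kfix (kr (Cx n) (kof (.u2b ⟨0, hn⟩ rfl)))
    (by simp [mul_assoc]) rfl) ?_
  exact kof (.u3a ⟨0, hn⟩ rfl)

/-- `y * e_top ≡ y`. -/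
lemma yETop (hn : 1 ≤ n) : K n (Cy n * Ce (fTop hn)) (Cy n) := by
  refine kt (kr _ (ks (kof (.u2a (fTop hn) rfl)))) ?_
  -- y*(x*y) ≡ y
  refine kt (kfix (kl (Cy n) (kof (.u2b ⟨0, hn⟩ rfl)))
    (by simp [mul_assoc]) rfl) ?_
  exact kof (.u3b ⟨0, hn⟩ rfl)

/-- `e_i * y ≡ y * (e_{i-1} * e_top)` for `i ≥ 1`. -/
lemma eY (hn : 1 ≤ n) (i i' : Fin n) (h : (i' : ℕ) + 1 = (i : ℕ)) :
    K n (Ce i * Cy n) (Cy n * (Ce i' * Ce (fTop hn))) := by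
  have h0i : (⟨0, hn⟩ : Fin n) < i := by rw [Fin.lt_def]; simp only [Fin.val_mk]; omega
  refine kt (kr _ (ks (kof (.u3b ⟨0, hn⟩ rfl)))) ?_
  -- e_i * (e_0 * y) ≡ …
  refine kt (kfix (kl (Cy n) (ks (kof (.u4 ⟨0, hn⟩ i h0i))))
    (by simp [mul_assoc]) rfl) ?_
  -- (e_0 * e_i) * y ≡ …
  refine kt (kl _ (kl _ (ks (kof (.u2b ⟨0, hn⟩ rfl))))) ?_
  -- ((y*x) * e_i) * y ≡ …
  refine kt (kfix (kr (Cy n) (kl (Cy n) (kof (.u5 i' i h))))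
    (by simp [mul_assoc]) rfl) ?_
  -- y * ((e_{i'} * x) * y) ≡ y * (e_{i'} * e_top)
  exact kfix (kr _ (kr _ (kof (.u2a (fTop hn) rfl)))) (by simp [mul_assoc]) rfl

/-- push `x` left through a word in the `e`'s. -/
lemma pushX (hn : 1 ≤ n) (u : Cw n) (hu : u ∈ ES n) :
    ∃ u', u' ∈ ES n ∧ K n (u * Cx n) (Cx n * u') := by
  induction hu using Submonoid.closure_induction with
  | mem v hv =>
    obtain ⟨i, rfl⟩ := hv
    by_cases hi : (i : ℕ) = n - 1
    · refine ⟨1, one_mem _, ?_⟩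
      rw [mul_one]
      have : i = fTop hn := Fin.ext hi
      rw [this]; exact eTopX hn
    · have hlt : (i : ℕ) + 1 < n := by have := i.isLt; omega
      exact ⟨Ce ⟨(i : ℕ) + 1, hlt⟩, ceMem _, ks (kof (.u5 i ⟨(i : ℕ) + 1, hlt⟩ rfl))⟩
  | one => exact ⟨1, one_mem _, by rw [one_mul, mul_one]; exact (K n).refl _⟩
  | mul a b ha hb iha ihb =>
    obtain ⟨a', ha', hka⟩ := iha
    obtain ⟨b', hb', hkb⟩ := ihb
    refine ⟨a' * b', mul_mem ha' hb', ?_⟩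
    refine kt (kfix (kr a hkb) (by simp [mul_assoc]) rfl) ?_
    exact kfix (kl b' hka) (by simp [mul_assoc]) (by simp [mul_assoc])

/-- push `y` left through a word in the `e`'s. -/
lemma pushY (hn : 1 ≤ n) (u : Cw n) (hu : u ∈ ES n) :
    ∃ u', u' ∈ ES n ∧ K n (u * Cy n) (Cy n * u') := by
  induction hu using Submonoid.closure_induction with
  | mem v hv =>
    obtain ⟨i, rfl⟩ := hv
    by_cases hi : (i : ℕ) = 0
    · refine ⟨1, one_mem _, by rw [mul_one]; exact kof (.u3b i hi)⟩
    · have hlt : (i : ℕ) - 1 < n := by have := i.isLt; omega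
      exact ⟨Ce ⟨(i : ℕ) - 1, hlt⟩ * Ce (fTop hn), mul_mem (ceMem _) (ceMem _),
        eY hn i ⟨(i : ℕ) - 1, hlt⟩ (by simp; omega)⟩
  | one => exact ⟨1, one_mem _, by rw [one_mul, mul_one]; exact (K n).refl _⟩
  | mul a b ha hb iha ihb =>
    obtain ⟨a', ha', hka⟩ := iha
    obtain ⟨b', hb', hkb⟩ := ihb
    refine ⟨a' * b', mul_mem ha' hb', ?_⟩
    refine kt (kfix (kr a hkb) (by simp [mul_assoc]) rfl) ?_
    exact kfix (kl b' hka) (by simp [mul_assoc]) (by simp [mul_assoc])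

end Aux
section Aux2
variable {n : ℕ}

/-- The product of the last `k` letters `e`. -/
def Gk (n k : ℕ) : Cw n := (((List.finRange n).drop (n - k)).map Ce).prod

lemma powSplit {M : Type*} [Monoid M] (a : M) {s t m : ℕ} (h : s + t = m) :
    a ^ m = a ^ s * a ^ t := by rw [← pow_add, h]

lemma G_zero : Gk n 0 = 1 := by
  have h : (List.finRange n).drop (n - 0) = [] := by
    apply List.drop_eq_nil_of_le; simp
  rw [Gk, h]; simp

lemma G_succ (k : ℕ) (hk : k < n) (j : Fin n) (hj : (j : ℕ) = n - k - 1) :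
    Gk n (k + 1) = Ce j * Gk n k := by
  have h1 : n - (k + 1) = (j : ℕ) := by omega
  have h2 : (j : ℕ) < (List.finRange n).length := by simpa using j.isLt
  have h3 : (j : ℕ) + 1 = n - k := by omega
  rw [Gk, Gk, h1, List.drop_eq_getElem_cons h2, List.map_cons, List.prod_cons, h3]
  have h4 : (List.finRange n)[(j : ℕ)] = j := by
    rw [List.getElem_finRange]; apply Fin.ext; simp
  rw [h4]

lemma G_n : Gk n n = CeProd n := by
  rw [Gk, CeProd, Nat.sub_self, List.drop_zero]

lemma G_mem (k : ℕ) : Gk n k ∈ ES n := prodMem _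

lemma ceProd_cons (hn : 1 ≤ n) : CeProd n = Ce ⟨0, hn⟩ * CeProdTail n := by
  have h2 : (0 : ℕ) < (List.finRange n).length := by rw [List.length_finRange]; omega
  rw [CeProd, CeProdTail]
  conv_lhs => rw [show List.finRange n = (List.finRange n).drop 0 from rfl,
    List.drop_eq_getElem_cons h2]
  rw [List.map_cons, List.prod_cons]
  congr 2
  rw [List.getElem_finRange]
  apply Fin.ext; simp

/-- `e_top * G k ≡ G k` for `1 ≤ k ≤ n`. -/
lemma eTopG (hn : 1 ≤ n) : ∀ k, 1 ≤ k → k ≤ n → K n (Ce (fTop hn) * Gk n k) (Gk n k) := by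
  intro k
  induction k with
  | zero => omega
  | succ k ih =>
    intro _ hk2
    rcases Nat.eq_zero_or_pos k with hk0 | hk1
    · subst hk0
      rw [G_succ 0 hn (fTop hn) rfl, G_zero, mul_one]
      exact kof (.u1 _)
    · have hkn : k < n := by omega
      have hjlt : n - k - 1 < n := by omega
      rw [G_succ k hkn ⟨n - k - 1, hjlt⟩ rfl]
      have hlt : (⟨n - k - 1, hjlt⟩ : Fin n) < fTop hn := by
        rw [Fin.lt_def]; simp only [Fin.val_mk, fTop]; omega
      refine kt (kfix (kl (Gk n k) (ks (kof (.u4 _ _ hlt)))) (by simp [mul_assoc]) rfl) ?_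
      exact kfix (kr _ (ih hk1 (by omega))) (by simp [mul_assoc]) rfl

/-- `G k * y ≡ y * G (k+1)` for `1 ≤ k ≤ n - 1`. -/
lemma GY (hn : 1 ≤ n) : ∀ k, 1 ≤ k → k ≤ n - 1 → K n (Gk n k * Cy n) (Cy n * Gk n (k + 1)) := by
  intro k
  induction k with
  | zero => omega
  | succ k ih =>
    intro _ hk2
    have hkn : k < n := by omega
    have hk1n : k + 1 < n := by omega
    have hjlt : n - k - 1 < n := by omega
    have hjlt2 : n - k - 2 < n := by omega
    rw [G_succ k hkn ⟨n - k - 1, hjlt⟩ rfl]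
    rcases Nat.eq_zero_or_pos k with hk0 | hk1
    · subst hk0
      rw [G_zero, mul_one, show (0 : ℕ) + 1 + 1 = 1 + 1 from rfl,
        G_succ 1 (by omega) ⟨n - 2, by omega⟩ rfl,
        G_succ 0 hn (fTop hn) rfl, G_zero, mul_one]
      exact eY hn ⟨n - 0 - 1, hjlt⟩ ⟨n - 2, by omega⟩ (by simp; omega)
    · -- k ≥ 1
      have step1 : K n ((Ce ⟨n - k - 1, hjlt⟩ * Gk n k) * Cy n)
          (Ce ⟨n - k - 1, hjlt⟩ * (Cy n * Gk n (k + 1))) := by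
        refine kfix (kr _ (ih hk1 (by omega))) (by simp [mul_assoc]) rfl
      refine kt step1 ?_
      have step2 := eY hn ⟨n - k - 1, hjlt⟩ ⟨n - k - 2, hjlt2⟩ (by simp; omega)
      refine kt (kfix (kl (Gk n (k + 1)) step2) (by simp [mul_assoc]) rfl) ?_
      -- (y * (e_{n-k-2} * e_top)) * G(k+1) ≡ y * G(k+2)
      have step3 : K n (Ce ⟨n - k - 2, hjlt2⟩ * (Ce (fTop hn) * Gk n (k + 1)))
          (Ce ⟨n - k - 2, hjlt2⟩ * Gk n (k + 1)) := kr _ (eTopG hn (k + 1) (by omega) (by omega))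
      refine kt (kfix (kr (Cy n) step3) (by simp [mul_assoc]) rfl) ?_
      rw [G_succ (k + 1) hk1n ⟨n - k - 2, hjlt2⟩ (by simp; omega)]
      exact kfix ((K n).refl _) (by simp [mul_assoc]) rfl

/-- `e_top * y^m ≡ y^m * G (m+1)` for `m ≤ n - 1`. -/
lemma eTopYPow (hn : 1 ≤ n) : ∀ m, m ≤ n - 1 →
    K n (Ce (fTop hn) * Cy n ^ m) (Cy n ^ m * Gk n (m + 1)) := by
  intro m
  induction m with
  | zero =>
    intro _
    rw [pow_zero, mul_one, one_mul, G_succ 0 hn (fTop hn) rfl, G_zero, mul_one]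
    exact (K n).refl _
  | succ m ih =>
    intro hm
    have h1 : K n (Ce (fTop hn) * Cy n ^ (m + 1)) ((Cy n ^ m * Gk n (m + 1)) * Cy n) := by
      refine kfix (kl (Cy n) (ih (by omega))) (by rw [pow_succ]; simp [mul_assoc]) rfl
    refine kt h1 ?_
    have h2 : K n (Gk n (m + 1) * Cy n) (Cy n * Gk n (m + 2)) := GY hn (m + 1) (by omega) hm
    refine kfix (kr (Cy n ^ m) h2) (by simp [mul_assoc]) (by rw [pow_succ]; simp [mul_assoc])

/-- `x^(m+1) ≡ x^(m+1) * e_m`. -/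
lemma xPowA : ∀ (m : ℕ) (_ : m < n) (j : Fin n), (j : ℕ) = m →
    K n (Cx n ^ (m + 1)) (Cx n ^ (m + 1) * Ce j) := by
  intro m
  induction m with
  | zero =>
    intro h j hj
    rw [pow_one]
    exact ks (kof (.u3a j hj))
  | succ m ih =>
    intro h j hj
    have hm : m < n := by omega
    have h1 : K n (Cx n ^ (m + 2)) ((Cx n ^ (m + 1) * Ce ⟨m, hm⟩) * Cx n) := by
      refine kfix (kl (Cx n) (ih hm ⟨m, hm⟩ rfl)) (by rw [pow_succ]) rfl
    refine kt h1 ?_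
    have h2 : K n (Ce ⟨m, hm⟩ * Cx n) (Cx n * Ce j) := ks (kof (.u5 ⟨m, hm⟩ j (by simp; omega)))
    refine kfix (kr (Cx n ^ (m + 1)) h2) (by simp [mul_assoc]) (by rw [pow_succ]; simp [mul_assoc])

/-- `x^n ≡ x^n * e_j` for every `j`. -/
lemma xPowA' (j : Fin n) : K n (Cx n ^ n) (Cx n ^ n * Ce j) := by
  have h := xPowA (j : ℕ) j.isLt j rfl
  have hsplit : Cx n ^ n = Cx n ^ (n - ((j : ℕ) + 1)) * Cx n ^ ((j : ℕ) + 1) := by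
    rw [← pow_add]; congr 1; have := j.isLt; omega
  rw [hsplit]
  exact kfix (kr _ h) rfl (by simp [mul_assoc])

lemma xPowList : ∀ l : List (Fin n), K n (Cx n ^ n) (Cx n ^ n * (l.map Ce).prod) := by
  intro l
  induction l with
  | nil => simpa using (K n).refl _
  | cons j l ih =>
    refine kt ih ?_
    refine kfix (kl ((l.map Ce).prod) (xPowA' j)) rfl (by simp [mul_assoc])

/-- `x^n ≡ x^(n-1) * (e_1 ⋯ e_n)`. -/
lemma xPowN (hn : 1 ≤ n) : K n (Cx n ^ n) (Cx n ^ (n - 1) * CeProd n) := by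
  refine kt (xPowList ((List.finRange n).drop 1)) ?_
  show K n (Cx n ^ n * CeProdTail n) _
  have h1 : Cx n ^ n * CeProdTail n = Cx n ^ (n - 1) * (Cx n * CeProdTail n) := by
    rw [powSplit (Cx n) (show (n - 1) + 1 = n by omega), pow_one, mul_assoc]
  rw [h1]
  exact kr _ (kof .u6)

/-- `y^n ≡ y^(n-1) * (e_1 ⋯ e_n)`. -/
lemma yPowN (hn : 1 ≤ n) : K n (Cy n ^ n) (Cy n ^ (n - 1) * CeProd n) := by
  have hps : Cy n ^ n = Cy n * Cy n ^ (n - 1) := by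
    rw [powSplit (Cy n) (show 1 + (n - 1) = n by omega), pow_one]
  have step1 : K n (Cy n ^ n) (Cy n ^ n * CeProd n) := by
    have h1 : K n (Cy n ^ n) ((Cy n * Ce (fTop hn)) * Cy n ^ (n - 1)) :=
      kfix (kl (Cy n ^ (n - 1)) (ks (yETop hn))) hps rfl
    refine kt h1 ?_
    have h2 := eTopYPow hn (n - 1) le_rfl
    have h3 : K n ((Cy n * Ce (fTop hn)) * Cy n ^ (n - 1))
        (Cy n * (Cy n ^ (n - 1) * Gk n ((n - 1) + 1))) :=
      kfix (kr (Cy n) h2) (by simp [mul_assoc]) rfl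
    refine kt h3 ?_
    have h5 : Cy n * (Cy n ^ (n - 1) * Gk n ((n - 1) + 1)) = Cy n ^ n * CeProd n := by
      rw [show (n - 1) + 1 = n from by omega, G_n, ← mul_assoc, ← hps]
    exact kfix ((K n).refl _) h5 rfl
  refine kt step1 ?_
  have h4 : K n (Cy n ^ n * CeProd n) (Cy n ^ n * (Cx n * CeProdTail n)) :=
    kr _ (ks (kof .u6))
  refine kt h4 ?_
  have h6 : Cy n ^ n * (Cx n * CeProdTail n)
      = Cy n ^ (n - 1) * ((Cy n * Cx n) * CeProdTail n) := by
    rw [powSplit (Cy n) (show (n - 1) + 1 = n by omega), pow_one]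
    simp [mul_assoc]
  rw [h6]
  refine kfix (kr (Cy n ^ (n - 1)) (kl (CeProdTail n) (kof (.u2b ⟨0, hn⟩ rfl)))) rfl ?_
  rw [ceProd_cons hn]

end Aux2
/-- Every word `w` over the alphabet `C = {x, y, e_1, …, e_n}` is
related, by the smallest monoid congruence containing `U`, to a word `z^r u` with
`z ∈ {x, y}`, `u` a word in the letters `e_1, …, e_n`, and `0 ≤ r ≤ n-1`. -/
theorem Urel.normal_form (n : ℕ) (hn : 1 ≤ n) (w : Cw n) :
    ∃ (z u : Cw n) (r : ℕ), (z = Cx n ∨ z = Cy n) ∧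
      u ∈ Submonoid.closure (Set.range (Ce (n := n))) ∧ r ≤ n - 1 ∧
      conGen (Urel n) w (z ^ r * u) := by
  suffices H : ∀ l : List (Bool ⊕ Fin n),
      ∃ (z u : Cw n) (r : ℕ), (z = Cx n ∨ z = Cy n) ∧
        u ∈ Submonoid.closure (Set.range (Ce (n := n))) ∧ r ≤ n - 1 ∧
        conGen (Urel n) (FreeMonoid.ofList l) (z ^ r * u) by
    simpa [FreeMonoid.ofList_toList] using H (FreeMonoid.toList w)
  intro l
  induction l using List.reverseRecOn with
  | nil =>
    exact ⟨Cx n, 1, 0, Or.inl rfl, one_mem _, by omega,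
      by simpa using (K n).refl (1 : Cw n)⟩
  | append_singleton l a ih =>
    obtain ⟨z, u, r, hz, hu, hr, hc⟩ := ih
    rw [FreeMonoid.ofList_append]
    have hsing : FreeMonoid.ofList [a] = FreeMonoid.of a := rfl
    rw [hsing]
    have hc' : K n (FreeMonoid.ofList l * FreeMonoid.of a) ((z ^ r * u) * FreeMonoid.of a) :=
      kl _ hc
    match a with
    | Sum.inr j =>
      refine ⟨z, u * Ce j, r, hz, mul_mem hu (ceMem j), hr, ?_⟩
      exact kfix hc' rfl (by rw [mul_assoc]; rfl)
    | Sum.inl false =>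
      -- the letter x
      obtain ⟨u', hu', hpx⟩ := pushX hn u hu
      have h2 : K n (FreeMonoid.ofList l * FreeMonoid.of (Sum.inl false))
          (z ^ r * (Cx n * u')) :=
        kt hc' (kfix (kr (z ^ r) hpx) (by simp [mul_assoc]; rfl) rfl)
      by_cases hzr : z = Cy n ∧ r ≠ 0
      · obtain ⟨hzy, hr0⟩ := hzr
        subst hzy
        obtain ⟨r', rfl⟩ := Nat.exists_eq_succ_of_ne_zero hr0
        refine ⟨Cy n, Ce ⟨0, hn⟩ * u', r', Or.inr rfl,
          mul_mem (ceMem _) hu', by omega, ?_⟩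
        refine kt h2 ?_
        have he : Cy n ^ (r' + 1) * (Cx n * u')
            = Cy n ^ r' * ((Cy n * Cx n) * u') := by
          rw [pow_succ]; simp [mul_assoc]
        rw [he]
        exact kfix (kr _ (kl _ (kof (.u2b ⟨0, hn⟩ rfl)))) rfl (by simp [mul_assoc])
      · have hzx : z ^ r = Cx n ^ r := by
          rcases hz with h | h
          · rw [h]
          · have : r = 0 := by
              by_contra hr0
              exact hzr ⟨h, hr0⟩
            rw [this, pow_zero, pow_zero]
        rw [hzx] at h2
        have h3 : K n (FreeMonoid.ofList l * FreeMonoid.of (Sum.inl false))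
            (Cx n ^ (r + 1) * u') :=
          kt h2 (kfix ((K n).refl _) (by rw [pow_succ]; simp [mul_assoc]) rfl)
        by_cases hrn : r + 1 ≤ n - 1
        · exact ⟨Cx n, u', r + 1, Or.inl rfl, hu', hrn, h3⟩
        · have hr1 : r + 1 = n := by omega
          rw [hr1] at h3
          refine ⟨Cx n, CeProd n * u', n - 1, Or.inl rfl,
            mul_mem ceProdMem hu', le_refl _, ?_⟩
          refine kt h3 ?_
          exact kfix (kl u' (xPowN hn)) rfl (by simp [mul_assoc])
    | Sum.inl true =>
      -- the letter y
      obtain ⟨u', hu', hpy⟩ := pushY hn u hu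
      have h2 : K n (FreeMonoid.ofList l * FreeMonoid.of (Sum.inl true))
          (z ^ r * (Cy n * u')) :=
        kt hc' (kfix (kr (z ^ r) hpy) (by simp [mul_assoc]; rfl) rfl)
      by_cases hzr : z = Cx n ∧ r ≠ 0
      · obtain ⟨hzy, hr0⟩ := hzr
        subst hzy
        obtain ⟨r', rfl⟩ := Nat.exists_eq_succ_of_ne_zero hr0
        refine ⟨Cx n, Ce (fTop hn) * u', r', Or.inl rfl,
          mul_mem (ceMem _) hu', by omega, ?_⟩
        refine kt h2 ?_
        have he : Cx n ^ (r' + 1) * (Cy n * u')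
            = Cx n ^ r' * ((Cx n * Cy n) * u') := by
          rw [pow_succ]; simp [mul_assoc]
        rw [he]
        exact kfix (kr _ (kl _ (kof (.u2a (fTop hn) rfl)))) rfl (by simp [mul_assoc])
      · have hzx : z ^ r = Cy n ^ r := by
          rcases hz with h | h
          · have : r = 0 := by
              by_contra hr0
              exact hzr ⟨h, hr0⟩
            rw [this, pow_zero, pow_zero]
          · rw [h]
        rw [hzx] at h2
        have h3 : K n (FreeMonoid.ofList l * FreeMonoid.of (Sum.inl true))
            (Cy n ^ (r + 1) * u') :=
          kt h2 (kfix ((K n).refl _) (by rw [pow_succ]; simp [mul_assoc]) rfl)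
        by_cases hrn : r + 1 ≤ n - 1
        · exact ⟨Cy n, u', r + 1, Or.inr rfl, hu', hrn, h3⟩
        · have hr1 : r + 1 = n := by omega
          rw [hr1] at h3
          refine ⟨Cy n, CeProd n * u', n - 1, Or.inr rfl,
            mul_mem ceProdMem hu', le_refl _, ?_⟩
          refine kt h3 ?_
          exact kfix (kl u' (yPowN hn)) rfl (by simp [mul_assoc])
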